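/- arXiv:1503.02551 — 2 statements merged into one kernel-verified Lean document; each statement's English description precedes it below -/
import Mathlib

section
/- Unbiasedness of random Fourier features: let P be a Borel probability measure on ℝ^d and let k : ℝ^d → ℝ satisfy k(δ) = E_{ω∼P}[cos(ωᵀδ)] for all δ ∈ ℝ^d. If ω ∼ P and b ∼ Uniform[0, 2π] are independent, then for all x, y ∈ ℝ^d, E_{ω,b}[ 2 cos(ωᵀx + b) · cos(ωᵀy + b) ] = k(x − y). -/
/-!
By the product-to-sum formula, `2 cos(ωᵀx + b) cos(ωᵀy + b) = cos(ωᵀ(x - y)) + cos(ωᵀ(x + y) + 2b)`.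
For fixed `ω` the second term runs over two full periods as `b` ranges over `[0, 2π]`, so its
average vanishes; integrating out `b` first (Fubini) leaves `E_ω[cos(ωᵀ(x - y))] = k(x - y)`.
-/

open MeasureTheory Matrix

/-- The uniform probability measure on the interval `[0, 2π] ⊆ ℝ`. -/
noncomputable def uniform02pi : Measure ℝ :=
  (ENNReal.ofReal (2 * Real.pi))⁻¹ • volume.restrict (Set.Icc 0 (2 * Real.pi))

open Real

instance isProbabilityMeasure_uniform02pi : IsProbabilityMeasure uniform02pi := by
  constructor
  rw [uniform02pi, Measure.smul_apply, Measure.restrict_apply_univ, Real.volume_Icc, sub_zero,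
    smul_eq_mul, ENNReal.inv_mul_cancel (by simp [pi_pos]) ENNReal.ofReal_ne_top]

theorem integral_uniform02pi (f : ℝ → ℝ) :
    ∫ b, f b ∂uniform02pi = (2 * π)⁻¹ * ∫ b in 0..2 * π, f b := by
  rw [uniform02pi, integral_smul_measure, integral_Icc_eq_integral_Ioc,
    ← intervalIntegral.integral_of_le (by positivity), ENNReal.toReal_inv,
    ENNReal.toReal_ofReal (by positivity), smul_eq_mul]

theorem intervalIntegral_cos_int_mul_add_eq_zero {n : ℤ} (hn : n ≠ 0) (θ : ℝ) :
    ∫ b in 0..2 * π, cos (n * b + θ) = 0 := by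
  have hn' : (n : ℝ) ≠ 0 := Int.cast_ne_zero.mpr hn
  rw [intervalIntegral.integral_comp_mul_add cos hn', integral_cos, mul_zero, zero_add,
    add_comm, sin_periodic.int_mul n, sub_self, smul_zero]

theorem integral_uniform02pi_two_mul_cos_mul_cos (a c : ℝ) :
    ∫ b, 2 * cos (a + b) * cos (c + b) ∂uniform02pi = cos (a - c) := by
  have hsplit : ∀ b, 2 * cos (a + b) * cos (c + b) = cos (a - c) + cos ((2 : ℤ) * b + (a + c)) :=
    fun b => by rw [two_mul_cos_mul_cos]; congr 2 <;> push_cast <;> ring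
  have hint : Integrable (fun b => cos ((2 : ℤ) * b + (a + c))) uniform02pi :=
    Integrable.of_bound (by fun_prop) 1 (ae_of_all _ fun b => abs_cos_le_one _)
  simp_rw [hsplit]
  rw [integral_add (integrable_const _) hint, integral_const, probReal_univ, one_smul,
    integral_uniform02pi, intervalIntegral_cos_int_mul_add_eq_zero two_ne_zero, mul_zero, add_zero]

/-- Unbiasedness of random Fourier features: if `P` is a Borel probability measure on `ℝ^d`
and `k δ = E_{ω∼P}[cos (ωᵀδ)]` for all `δ`, then for independent `ω ∼ P`,
`b ∼ Uniform[0, 2π]` and all `x, y ∈ ℝ^d`,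
`E[2 cos(ωᵀx + b) cos(ωᵀy + b)] = k (x - y)`. -/
theorem random_fourier_features_unbiased {d : ℕ} (P : Measure (Fin d → ℝ))
    [IsProbabilityMeasure P] (k : (Fin d → ℝ) → ℝ)
    (hk : ∀ δ, k δ = ∫ ω, Real.cos (ω ⬝ᵥ δ) ∂P) (x y : Fin d → ℝ) :
    ∫ p : (Fin d → ℝ) × ℝ,
        2 * Real.cos (p.1 ⬝ᵥ x + p.2) * Real.cos (p.1 ⬝ᵥ y + p.2)
      ∂(P.prod uniform02pi) = k (x - y) := by
  have hint : Integrable (fun p : (Fin d → ℝ) × ℝ =>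
      2 * cos (p.1 ⬝ᵥ x + p.2) * cos (p.1 ⬝ᵥ y + p.2)) (P.prod uniform02pi) := by
    refine Integrable.of_bound (by fun_prop) 2 (ae_of_all _ fun p => ?_)
    rw [norm_mul, norm_mul, Real.norm_two, mul_assoc]
    exact mul_le_of_le_one_right two_pos.le
      (mul_le_one₀ (abs_cos_le_one _) (norm_nonneg _) (abs_cos_le_one _))
  rw [integral_prod _ hint, hk]
  simp_rw [integral_uniform02pi_two_mul_cos_mul_cos, dotProduct_sub]
end

section
/- Closed form of the expected Gaussian kernel between two Gaussians: let r = N(m_r, V_r) and s = N(m_s, V_s) be Gaussian measures on ℝ^d with symmetric positive definite covariances V_r, V_s, and let Σ be a symmetric positive definite d×d matrix. Then E_{x∼r} E_{y∼s}[ exp(−(1/2)(x−y)ᵀ Σ^{-1} (x−y)) ] = √( det(Σ) / det(V_r + V_s + Σ) ) · exp( −(1/2)(m_r − m_s)ᵀ (V_r + V_s + Σ)^{-1} (m_r − m_s) ). -/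
open MeasureTheory ProbabilityTheory Matrix

/-- The positive semidefinite square root of a positive semidefinite matrix (the definition
`Matrix.PosSemidef.sqrt` of the older Mathlib, since removed). -/
noncomputable def Matrix.PosSemidef.sqrt {n : Type*} [Fintype n] [DecidableEq n]
    {A : Matrix n n ℝ} (hA : A.PosSemidef) : Matrix n n ℝ :=
  hA.1.eigenvectorUnitary.1 * diagonal ((√·) ∘ hA.1.eigenvalues) *
  (star hA.1.eigenvectorUnitary : Matrix n n ℝ)

/-- The standard Gaussian measure on `ℝ^d`: product of `d` i.i.d. `N(0,1)` coordinates. -/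
noncomputable def stdGaussianPi (d : ℕ) : Measure (Fin d → ℝ) :=
  Measure.pi fun _ => gaussianReal 0 1

/-- The multivariate Gaussian measure `N(m, V)` on `ℝ^d` with mean vector `m` and symmetric
positive semidefinite covariance matrix `V`, realized as the law of `m + V^{1/2} z` for a
standard Gaussian vector `z`. -/
noncomputable def multivariateGaussian {d : ℕ} (m : Fin d → ℝ) (V : Matrix (Fin d) (Fin d) ℝ)
    (hV : V.PosSemidef) : Measure (Fin d → ℝ) :=
  Measure.map (fun z => m + hV.sqrt.mulVec z) (stdGaussianPi d)

/-!
Write `N(m, V)` as the law of `m + V^{1/2} z` with `z` standard Gaussian. Averaging the kernel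
`k_S(u) = exp (-(1/2) uᵀ S⁻¹ u)` at `x - t` over `x ∼ N(m, V)` is then a Gaussian integral of
an exponentiated quadratic in `z`. Completing the square and applying Woodbury's identity and
`det (1 + A B) = det (1 + B A)` turn it into `√(det S / det (S + V)) · k_{S+V}(m - t)`:
averaging the kernel over a Gaussian adds that Gaussian's covariance to the kernel parameter.
By Fubini we apply this first to `y ∼ N(m_s, V_s)` (parameter `S`) and then to
`x ∼ N(m_r, V_r)` (parameter `S + V_s`); the two square-root factors telescope.
-/

open Real
open scoped ENNReal

namespace Matrix.PosSemidef

variable {n : Type*} [Fintype n] [DecidableEq n] {A : Matrix n n ℝ}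

theorem posSemidef_sqrt (hA : A.PosSemidef) : hA.sqrt.PosSemidef := by
  have h := (PosSemidef.diagonal fun i => Real.sqrt_nonneg (hA.1.eigenvalues i))
    |>.mul_mul_conjTranspose_same (hA.1.eigenvectorUnitary : Matrix n n ℝ)
  simpa [Matrix.PosSemidef.sqrt, Unitary.coe_star, Matrix.star_eq_conjTranspose,
    Function.comp_def] using h

theorem sqrt_mul_self (hA : A.PosSemidef) : hA.sqrt * hA.sqrt = A := by
  set U : Matrix n n ℝ := (hA.1.eigenvectorUnitary : Matrix n n ℝ)
  have hU : star U * U = 1 := Unitary.coe_star_mul_self _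
  calc hA.sqrt * hA.sqrt
      = U * (diagonal ((√·) ∘ hA.1.eigenvalues) * (star U * U) *
          diagonal ((√·) ∘ hA.1.eigenvalues)) * star U := by
        simp only [Matrix.PosSemidef.sqrt, U, mul_assoc]
    _ = U * diagonal (RCLike.ofReal ∘ hA.1.eigenvalues) * star U := by
        rw [hU, mul_one, diagonal_mul_diagonal]
        congr 3
        ext i
        simp [Real.mul_self_sqrt (hA.eigenvalues_nonneg i)]
    _ = A := hA.1.spectral_theorem.symm

theorem transpose_sqrt (hA : A.PosSemidef) : hA.sqrtᵀ = hA.sqrt :=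
  hA.posSemidef_sqrt.isHermitian.eq

end Matrix.PosSemidef

theorem MeasureTheory.lintegral_fin_nat_prod_eq_prod {n : ℕ} {E : Type*} {mE : MeasurableSpace E}
    {μ : Fin n → Measure E} [∀ i, SigmaFinite (μ i)]
    {f : Fin n → E → ℝ≥0∞} (hf : ∀ i, Measurable (f i)) :
    ∫⁻ x : Fin n → E, ∏ i, f i (x i) ∂(Measure.pi μ)
      = ∏ i, ∫⁻ x, f i x ∂(μ i) := by
  induction n with
  | zero => simp
  | succ n n_ih =>
      calc
        _ = ∫⁻ x : E × (Fin n → E), f 0 x.1 * ∏ i : Fin n, f i.succ (x.2 i)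
            ∂((μ 0).prod (Measure.pi (fun i ↦ μ i.succ))) := by
          rw [← ((measurePreserving_piFinSuccAbove μ 0).symm).lintegral_comp_emb
            (MeasurableEquiv.measurableEmbedding _)]
          simp_rw [MeasurableEquiv.piFinSuccAbove_symm_apply, Fin.insertNthEquiv,
            Fin.prod_univ_succ, Fin.insertNth_zero, Equiv.coe_fn_mk, Fin.cons_succ,
            Fin.zero_succAbove, cast_eq, Fin.cons_zero]
        _ = (∫⁻ x, f 0 x ∂μ 0) * ∏ i : Fin n, ∫⁻ x, f i.succ x ∂(μ i.succ) := by
          rw [← n_ih fun i => hf i.succ, ← lintegral_prod_mul (hf 0).aemeasurable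
            (Finset.measurable_prod _ fun i _ =>
              (hf i.succ).comp (measurable_pi_apply i)).aemeasurable]
        _ = ∏ i, ∫⁻ x, f i x ∂(μ i) := by rw [Fin.prod_univ_succ]

section MatrixIdentities

variable {ι : Type*} [Fintype ι]

theorem Matrix.mulVec_dotProduct (A : Matrix ι ι ℝ) (x y : ι → ℝ) :
    A *ᵥ x ⬝ᵥ y = x ⬝ᵥ Aᵀ *ᵥ y := by
  rw [← vecMul_transpose, dotProduct_mulVec]

theorem Matrix.add_dotProduct_mulVec_add {Q : Matrix ι ι ℝ} (hQ : Qᵀ = Q) (x y : ι → ℝ) :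
    (x + y) ⬝ᵥ Q *ᵥ (x + y)
      = x ⬝ᵥ Q *ᵥ x + 2 * (y ⬝ᵥ Q *ᵥ x) + y ⬝ᵥ Q *ᵥ y := by
  have hxy : x ⬝ᵥ Q *ᵥ y = y ⬝ᵥ Q *ᵥ x := by
    rw [← dotProduct_transpose_mulVec, hQ]
  rw [mulVec_add, add_dotProduct, dotProduct_add, dotProduct_add, hxy]
  ring

variable [DecidableEq ι]

theorem Matrix.PosDef.posSemidef_transpose_mul_inv_mul {S : Matrix ι ι ℝ} (hS : S.PosDef)
    (R : Matrix ι ι ℝ) : (Rᵀ * S⁻¹ * R).PosSemidef := by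
  simpa using hS.inv.posSemidef.conjTranspose_mul_mul_same R

theorem Matrix.det_one_add_transpose_mul_inv_mul {S : Matrix ι ι ℝ} (hS : S.PosDef)
    (R : Matrix ι ι ℝ) : (1 + Rᵀ * S⁻¹ * R).det = (S + R * Rᵀ).det / S.det := by
  rw [mul_assoc, det_one_add_mul_comm, mul_assoc, ← nonsing_inv_mul S hS.det_pos.ne'.isUnit,
    ← mul_add, det_mul, det_nonsing_inv, Ring.inverse_eq_inv', inv_mul_eq_div]

theorem Matrix.dotProduct_inv_add_mul_transpose_mulVec {S : Matrix ι ι ℝ} (hS : S.PosDef)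
    (R : Matrix ι ι ℝ) (v : ι → ℝ) :
    v ⬝ᵥ (S + R * Rᵀ)⁻¹ *ᵥ v = v ⬝ᵥ S⁻¹ *ᵥ v
        - (Rᵀ *ᵥ S⁻¹ *ᵥ v) ⬝ᵥ (1 + Rᵀ * S⁻¹ * R)⁻¹ *ᵥ (Rᵀ *ᵥ S⁻¹ *ᵥ v) := by
  have hwoodbury := add_mul_mul_inv_eq_sub S R 1 Rᵀ hS.isUnit isUnit_one
    (by simpa using (PosDef.one.add_posSemidef (hS.posSemidef_transpose_mul_inv_mul R)).isUnit)
  have hSt : S⁻¹ᵀ = S⁻¹ := hS.inv.isHermitian.eq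
  rw [mul_one, inv_one] at hwoodbury
  rw [hwoodbury, sub_mulVec, dotProduct_sub]
  congr 1
  simp only [← mulVec_mulVec]
  rw [dotProduct_mulVec, dotProduct_mulVec, ← mulVec_transpose, ← mulVec_transpose, hSt]

end MatrixIdentities

section LebesgueGaussianIntegrals

variable {ι : Type*} [Fintype ι]

theorem integral_exp_neg_half_dotProduct_self :
    ∫ z : ι → ℝ, exp (-(1 / 2) * (z ⬝ᵥ z)) = √(2 * π) ^ Fintype.card ι := by
  have h (z : ι → ℝ) : exp (-(1 / 2) * (z ⬝ᵥ z)) = ∏ i, exp (-(1 / 2) * z i ^ 2) := by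
    rw [← exp_sum, dotProduct, Finset.mul_sum]
    simp only [sq]
  simp_rw [h]
  rw [volume_pi, integral_fintype_prod_eq_pow fun x => exp (-(1 / 2) * x ^ 2), integral_gaussian]
  norm_num [mul_comm]

variable [DecidableEq ι]

theorem integral_comp_mulVec {P : Matrix ι ι ℝ} (hP : P.det ≠ 0) (f : (ι → ℝ) → ℝ) :
    ∫ z, f (P *ᵥ z) = |P.det|⁻¹ * ∫ z, f z := by
  have hinj : Function.Injective (toLin' P) :=
    mulVec_injective_iff_isUnit.mpr ((isUnit_iff_isUnit_det P).mpr hP.isUnit)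
  have hemb : MeasurableEmbedding (toLin' P) :=
    (LinearMap.isClosedEmbedding_of_injective (LinearMap.ker_eq_bot.mpr hinj)).measurableEmbedding
  rw [show ∫ z, f (P *ᵥ z) = ∫ z, f (toLin' P z) from rfl, ← hemb.integral_map,
    Real.map_matrix_volume_pi_eq_smul_volume_pi hP, integral_smul_measure,
    ENNReal.toReal_ofReal (by positivity), abs_inv, smul_eq_mul]

theorem integral_exp_neg_half_dotProduct_mulVec {C : Matrix ι ι ℝ} (hC : C.PosDef) :
    ∫ z : ι → ℝ, exp (-(1 / 2) * (z ⬝ᵥ C *ᵥ z))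
      = √(2 * π) ^ Fintype.card ι / √C.det := by
  set P := hC.inv.posSemidef.sqrt
  have hPP : P * P = C⁻¹ := hC.inv.posSemidef.sqrt_mul_self
  have hPC : P * C * P = 1 := by
    rw [mul_eq_one_comm, ← mul_assoc, hPP, nonsing_inv_mul _ hC.det_pos.ne'.isUnit]
  have hdetP : P.det * P.det = C.det⁻¹ := by
    rw [← det_mul, hPP, det_nonsing_inv, Ring.inverse_eq_inv']
  have hdetP_ne : P.det ≠ 0 := fun h => by
    simp only [h, mul_zero, zero_eq_inv] at hdetP
    exact hC.det_pos.ne hdetP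
  have hquad (z : ι → ℝ) : P *ᵥ z ⬝ᵥ C *ᵥ (P *ᵥ z) = z ⬝ᵥ z := by
    rw [mulVec_dotProduct, hC.inv.posSemidef.transpose_sqrt, mulVec_mulVec,
      mulVec_mulVec, hPC, one_mulVec]
  calc ∫ z : ι → ℝ, exp (-(1 / 2) * (z ⬝ᵥ C *ᵥ z))
      = |P.det| * ∫ z : ι → ℝ, exp (-(1 / 2) * (P *ᵥ z ⬝ᵥ C *ᵥ (P *ᵥ z))) := by
        rw [integral_comp_mulVec hdetP_ne (fun z => exp (-(1 / 2) * (z ⬝ᵥ C *ᵥ z))),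
          mul_inv_cancel_left₀ (abs_ne_zero.mpr hdetP_ne)]
    _ = √(2 * π) ^ Fintype.card ι / √C.det := by
        simp_rw [hquad]
        rw [integral_exp_neg_half_dotProduct_self, ← sqrt_mul_self_eq_abs, hdetP, sqrt_inv,
          inv_mul_eq_div]

theorem integral_exp_neg_half_dotProduct_mulVec_add {C : Matrix ι ι ℝ} (hC : C.PosDef)
    (b : ι → ℝ) :
    ∫ z : ι → ℝ, exp (-(1 / 2) * (z ⬝ᵥ C *ᵥ z) + b ⬝ᵥ z)
      = √(2 * π) ^ Fintype.card ι / √C.det * exp (1 / 2 * (b ⬝ᵥ C⁻¹ *ᵥ b)) := by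
  set a := C⁻¹ *ᵥ b
  have hCa : C *ᵥ a = b := by
    rw [mulVec_mulVec, mul_nonsing_inv _ hC.det_pos.ne'.isUnit, one_mulVec]
  have hCt : Cᵀ = C := hC.isHermitian.eq
  have hcross (z : ι → ℝ) : a ⬝ᵥ C *ᵥ z = b ⬝ᵥ z := by
    rw [← dotProduct_transpose_mulVec, hCt, hCa, dotProduct_comm]
  have hsquare (z : ι → ℝ) : -(1 / 2) * ((z + a) ⬝ᵥ C *ᵥ (z + a)) + b ⬝ᵥ (z + a)
      = -(1 / 2) * (z ⬝ᵥ C *ᵥ z) + 1 / 2 * (b ⬝ᵥ a) := by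
    rw [add_dotProduct_mulVec_add hCt, hcross, hCa, dotProduct_comm a b, dotProduct_add]
    ring
  rw [← integral_add_right_eq_self _ a]
  simp_rw [hsquare, exp_add]
  rw [integral_mul_const, integral_exp_neg_half_dotProduct_mulVec hC]

end LebesgueGaussianIntegrals

section GaussianKernel

variable {ι : Type*} [Fintype ι] [DecidableEq ι]

noncomputable def gaussianKernel (S : Matrix ι ι ℝ) (u : ι → ℝ) : ℝ :=
  exp (-(1 / 2) * (u ⬝ᵥ S⁻¹ *ᵥ u))

theorem gaussianKernel_neg (S : Matrix ι ι ℝ) (u : ι → ℝ) :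
    gaussianKernel S (-u) = gaussianKernel S u := by
  simp only [gaussianKernel, neg_dotProduct, mulVec_neg, dotProduct_neg, neg_neg]

theorem gaussianKernel_sub_comm (S : Matrix ι ι ℝ) (x y : ι → ℝ) :
    gaussianKernel S (x - y) = gaussianKernel S (y - x) := by
  rw [← neg_sub, gaussianKernel_neg]

@[fun_prop]
theorem continuous_gaussianKernel (S : Matrix ι ι ℝ) : Continuous (gaussianKernel S) := by
  unfold gaussianKernel
  fun_prop

theorem gaussianKernel_le_one {S : Matrix ι ι ℝ} (hS : S.PosDef) (u : ι → ℝ) :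
    gaussianKernel S u ≤ 1 := by
  have := hS.inv.posSemidef.dotProduct_mulVec_nonneg u
  rw [gaussianKernel, exp_le_one_iff]
  simp only [star_trivial] at this
  linarith

end GaussianKernel

theorem prod_gaussianPDFReal_zero_one {ι : Type*} [Fintype ι] (z : ι → ℝ) :
    ∏ i, gaussianPDFReal 0 1 (z i)
      = (√(2 * π))⁻¹ ^ Fintype.card ι * exp (-(1 / 2) * (z ⬝ᵥ z)) := by
  simp only [gaussianPDFReal_def, NNReal.coe_one, mul_one, sub_zero, Finset.prod_mul_distrib,
    Finset.prod_const, Finset.card_univ, ← exp_sum, dotProduct, Finset.mul_sum]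
  ring_nf

section StandardGaussian

variable {d : ℕ}

instance isProbabilityMeasure_stdGaussianPi : IsProbabilityMeasure (stdGaussianPi d) := by
  unfold stdGaussianPi
  infer_instance

theorem stdGaussianPi_eq_withDensity :
    stdGaussianPi d = volume.withDensity fun z =>
      ENNReal.ofReal ((√(2 * π))⁻¹ ^ d * exp (-(1 / 2) * (z ⬝ᵥ z))) := by
  have hpdf : (fun z : Fin d → ℝ =>
      ENNReal.ofReal ((√(2 * π))⁻¹ ^ d * exp (-(1 / 2) * (z ⬝ᵥ z))))
        = fun z => ∏ i, gaussianPDF 0 1 (z i) := by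
    ext z
    have h := prod_gaussianPDFReal_zero_one z
    rw [Fintype.card_fin] at h
    rw [← h, ENNReal.ofReal_prod_of_nonneg fun i _ => gaussianPDFReal_nonneg 0 1 (z i)]
    rfl
  refine hpdf ▸ Measure.pi_eq fun s hs => ?_
  rw [withDensity_apply _ (MeasurableSet.univ_pi hs), volume_pi, Measure.restrict_pi_pi,
    lintegral_fin_nat_prod_eq_prod fun _ => measurable_gaussianPDF 0 1]
  simp_rw [gaussianReal_apply 0 one_ne_zero]

theorem integral_stdGaussianPi (g : (Fin d → ℝ) → ℝ) :
    ∫ z, g z ∂stdGaussianPi d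
      = (√(2 * π))⁻¹ ^ d * ∫ z, exp (-(1 / 2) * (z ⬝ᵥ z)) * g z := by
  rw [stdGaussianPi_eq_withDensity, integral_withDensity_eq_integral_toReal_smul (by fun_prop)
    (ae_of_all _ fun z => ENNReal.ofReal_lt_top), ← integral_const_mul]
  congr 1 with z
  rw [ENNReal.toReal_ofReal (by positivity), smul_eq_mul, mul_assoc]

theorem integral_exp_neg_half_dotProduct_mulVec_add_stdGaussianPi
    {M : Matrix (Fin d) (Fin d) ℝ} (hM : M.PosSemidef) (b : Fin d → ℝ) :
    ∫ z, exp (-(1 / 2) * (z ⬝ᵥ M *ᵥ z) + b ⬝ᵥ z) ∂stdGaussianPi d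
      = exp (1 / 2 * (b ⬝ᵥ (1 + M)⁻¹ *ᵥ b)) / √(1 + M).det := by
  have hexp (z : Fin d → ℝ) :
      exp (-(1 / 2) * (z ⬝ᵥ z)) * exp (-(1 / 2) * (z ⬝ᵥ M *ᵥ z) + b ⬝ᵥ z)
        = exp (-(1 / 2) * (z ⬝ᵥ (1 + M) *ᵥ z) + b ⬝ᵥ z) := by
    rw [← exp_add, add_mulVec, one_mulVec, dotProduct_add]
    ring_nf
  simp_rw [integral_stdGaussianPi, hexp]
  rw [integral_exp_neg_half_dotProduct_mulVec_add (PosDef.one.add_posSemidef hM), Fintype.card_fin]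
  have hconst : (√(2 * π))⁻¹ ^ d * √(2 * π) ^ d = 1 := by
    rw [inv_pow, inv_mul_cancel₀ (by positivity)]
  rw [div_mul_eq_mul_div, mul_div_assoc', ← mul_assoc, hconst, one_mul]

theorem integral_gaussianKernel_add_mulVec_stdGaussianPi {S : Matrix (Fin d) (Fin d) ℝ}
    (hS : S.PosDef) (R : Matrix (Fin d) (Fin d) ℝ) (v : Fin d → ℝ) :
    ∫ z, gaussianKernel S (v + R *ᵥ z) ∂stdGaussianPi d
      = √(S.det / (S + R * Rᵀ).det) * gaussianKernel (S + R * Rᵀ) v := by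
  have hSt : S⁻¹ᵀ = S⁻¹ := hS.inv.isHermitian.eq
  have hexpand (z : Fin d → ℝ) : gaussianKernel S (v + R *ᵥ z)
      = exp (-(1 / 2) * (z ⬝ᵥ (Rᵀ * S⁻¹ * R) *ᵥ z) + -(Rᵀ *ᵥ S⁻¹ *ᵥ v) ⬝ᵥ z)
        * gaussianKernel S v := by
    rw [gaussianKernel, gaussianKernel, ← exp_add, add_dotProduct_mulVec_add hSt,
      mulVec_dotProduct, mulVec_dotProduct, ← mulVec_mulVec, ← mulVec_mulVec, neg_dotProduct,
      dotProduct_comm (Rᵀ *ᵥ S⁻¹ *ᵥ v)]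
    ring_nf
  simp_rw [hexpand]
  rw [integral_mul_const, integral_exp_neg_half_dotProduct_mulVec_add_stdGaussianPi
      (hS.posSemidef_transpose_mul_inv_mul R),
    det_one_add_transpose_mul_inv_mul hS, gaussianKernel, gaussianKernel,
    dotProduct_inv_add_mul_transpose_mulVec hS, neg_dotProduct, mulVec_neg, dotProduct_neg,
    neg_neg, div_eq_inv_mul, ← sqrt_inv, inv_div, mul_assoc, ← exp_add]
  ring_nf

instance isProbabilityMeasure_multivariateGaussian (m : Fin d → ℝ)
    {V : Matrix (Fin d) (Fin d) ℝ} (hV : V.PosSemidef) :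
    IsProbabilityMeasure (multivariateGaussian m V hV) :=
  Measure.isProbabilityMeasure_map (by fun_prop)

theorem integral_gaussianKernel_sub_multivariateGaussian {S V : Matrix (Fin d) (Fin d) ℝ}
    (hS : S.PosDef) (hV : V.PosSemidef) (m t : Fin d → ℝ) :
    ∫ x, gaussianKernel S (x - t) ∂multivariateGaussian m V hV
      = √(S.det / (S + V).det) * gaussianKernel (S + V) (m - t) := by
  rw [_root_.multivariateGaussian, integral_map (by fun_prop) (by fun_prop)]
  simp_rw [add_sub_right_comm m]
  rw [integral_gaussianKernel_add_mulVec_stdGaussianPi hS, hV.transpose_sqrt, hV.sqrt_mul_self]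

end StandardGaussian

/-- Closed form of the expected Gaussian kernel between two Gaussians: for
`r = N(m_r, V_r)`, `s = N(m_s, V_s)` with symmetric positive definite covariances and a
symmetric positive definite kernel parameter `Σ`,
`E_{x∼r} E_{y∼s} [exp (-(1/2)(x-y)ᵀΣ⁻¹(x-y))]
  = √(det Σ / det (V_r + V_s + Σ)) * exp (-(1/2)(m_r - m_s)ᵀ(V_r + V_s + Σ)⁻¹(m_r - m_s))`. -/
theorem expected_gaussian_kernel_of_gaussians {d : ℕ} (mr ms : Fin d → ℝ)
    (Vr Vs S : Matrix (Fin d) (Fin d) ℝ) (hVr : Vr.PosDef) (hVs : Vs.PosDef)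
    (hS : S.PosDef) :
    ∫ p : (Fin d → ℝ) × (Fin d → ℝ),
        Real.exp (-(1 / 2) * ((p.1 - p.2) ⬝ᵥ S⁻¹.mulVec (p.1 - p.2)))
        ∂((multivariateGaussian mr Vr hVr.posSemidef).prod
          (multivariateGaussian ms Vs hVs.posSemidef)) =
      Real.sqrt (S.det / (Vr + Vs + S).det) *
        Real.exp (-(1 / 2) * ((mr - ms) ⬝ᵥ (Vr + Vs + S)⁻¹.mulVec (mr - ms))) := by
  change ∫ p : (Fin d → ℝ) × (Fin d → ℝ), gaussianKernel S (p.1 - p.2) ∂_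
    = √_ * gaussianKernel (Vr + Vs + S) (mr - ms)
  have hSVs : (S + Vs).PosDef := hS.add_posSemidef hVs.posSemidef
  have hint :
      Integrable (fun p : (Fin d → ℝ) × (Fin d → ℝ) => gaussianKernel S (p.1 - p.2))
        ((multivariateGaussian mr Vr hVr.posSemidef).prod
          (multivariateGaussian ms Vs hVs.posSemidef)) :=
    Integrable.of_bound (by fun_prop) 1 (ae_of_all _ fun p =>
      (norm_of_nonneg (exp_pos _).le).trans_le (gaussianKernel_le_one hS _))
  have hinner (x : Fin d → ℝ) :
      ∫ y, gaussianKernel S (x - y) ∂multivariateGaussian ms Vs hVs.posSemidef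
        = √(S.det / (S + Vs).det) * gaussianKernel (S + Vs) (x - ms) := by
    simp_rw [gaussianKernel_sub_comm S x, integral_gaussianKernel_sub_multivariateGaussian hS,
      gaussianKernel_sub_comm (S + Vs) ms]
  rw [integral_prod _ hint]
  simp_rw [hinner]
  rw [integral_const_mul, integral_gaussianKernel_sub_multivariateGaussian hSVs, ← mul_assoc,
    ← sqrt_mul (div_nonneg hS.det_pos.le hSVs.det_pos.le), div_mul_div_cancel₀ hSVs.det_pos.ne',
    show S + Vs + Vr = Vr + Vs + S by abel]
end
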